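/- Fix an integer r ≥ 2 and n ≥ 4. For every nonempty subset V of [1, c_{n−1}] and every maximal interval component [e_i, e_i+ℓ_i−1] of V, the subpath of D_{n+1} given by f_i(V) is a blue, green, or red subpath of D_{n+1} (i.e., it equals α(i',k') for some 0 ≤ i' < k' ≤ c_{n−1}); conversely, every blue, green, or red subpath α(i',k') of D_{n+1} equals the subpath given by f(I) for some interval I ⊆ [1, c_{n−1}]. -/

import Mathlib

open scoped Classical

namespace CF

noncomputable section

/-- The sequence `c` : `c 1 = 0`, `c 2 = 1`, `c n = r * c (n-1) - c (n-2)`.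
(The value `c 0 = -1` is the unique value consistent with the recurrence.) -/
def c (r : ℕ) : ℕ → ℤ
  | 0 => -1
  | 1 => 0
  | n + 2 => (r : ℤ) * c r (n + 1) - c r n

/-- `c` as a natural number (valid for indices `≥ 1` when `r ≥ 2`). -/
def cN (r n : ℕ) : ℕ := (c r n).toNat

/-- Height (y-coordinate) of the vertex `w_k` of the maximal Dyck path `D_n`:
the maximal Dyck path from `(0,0)` to `(c_{n-1}-c_{n-2}, c_{n-2})` weakly below the
diagonal has `w_k = (k - ⌊k·c_{n-2}/c_{n-1}⌋, ⌊k·c_{n-2}/c_{n-1}⌋)`. -/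
def hgt (r n k : ℕ) : ℕ := k * cN r (n - 2) / cN r (n - 1)

/-- The edge `α_j` of `D_n` is vertical (a north step). -/
def isVert (r n j : ℕ) : Prop := hgt r n (j - 1) < hgt r n j

/-- Index in the vertex sequence `w_0, …, w_{c_{n-1}}` of the vertex `v_j`
(the upper endpoint of the `j`-th vertical edge); `vpos r n 0 = 0`. -/
def vpos (r n j : ℕ) : ℕ := (j * cN r (n - 1) + cN r (n - 2) - 1) / cN r (n - 2)

/-- x-coordinate of the vertex `v_j` of `D_n` (its y-coordinate is `j`). -/
def vx (r n j : ℕ) : ℤ := (vpos r n j : ℤ) - (j : ℤ)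

/-- The slope `s_{i,t}` between `v_i` and `v_t` is at most the slope `s` of the diagonal,
expressed by cross-multiplication. -/
def slopeLE (r n i t : ℕ) : Prop :=
  ((t : ℤ) - (i : ℤ)) * (c r (n - 1) - c r (n - 2)) ≤ (vx r n t - vx r n i) * c r (n - 2)

/-- `{t | i < t ≤ k, s_{i,t} > s}`. -/
def badSet (r n i k : ℕ) : Finset ℕ :=
  (Finset.Icc (i + 1) k).filter fun t => ¬ slopeLE r n i t

/-- `α(i,k)` is blue: `s_{i,t} ≤ s` for all `i < t ≤ k`. -/
def isBlue (r n i k : ℕ) : Prop := badSet r n i k = ∅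

/-- `t₀` is the minimum of `{t | i < t ≤ k, s_{i,t} > s}`. -/
def minBad (r n i k t₀ : ℕ) : Prop :=
  t₀ ∈ badSet r n i k ∧ ∀ t ∈ badSet r n i k, t₀ ≤ t

/-- `α(i,k)` is `(m,w)`-green: the minimum `t₀` of `{t | i < t ≤ k, s_{i,t} > s}` exists and
equals `i + c_m - w·c_{m-1}`, with `3 ≤ m ≤ n-2` and `1 ≤ w < r-1`. -/
def isGreenMW (r n i k m w : ℕ) : Prop :=
  3 ≤ m ∧ m + 2 ≤ n ∧ 1 ≤ w ∧ (w : ℤ) < (r : ℤ) - 1 ∧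
    ∃ t₀ : ℕ, minBad r n i k t₀ ∧ (t₀ : ℤ) = (i : ℤ) + (c r m - (w : ℤ) * c r (m - 1))

def isGreen (r n i k : ℕ) : Prop := ∃ m w, isGreenMW r n i k m w

/-- `α(i,k)` is red: neither blue nor green. -/
def isRed (r n i k : ℕ) : Prop := ¬ isBlue r n i k ∧ ¬ isGreen r n i k

/-- An element of `P(D_n)`: either a single edge `α_j` (`Sum.inl j`) or a subpath
`α(i,k)` (`Sum.inr (i,k)`). -/
abbrev Elt := ℕ ⊕ ℕ × ℕ

/-- The set of (indices of) edges of `D_n` constituting an element of `P(D_n)`: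
a single edge; for `α(i,k)`, the edges from `v_i` (or from its immediate predecessor,
in the red case) to `v_k`. -/
def edges (r n : ℕ) : Elt → Finset ℕ
  | Sum.inl j => {j}
  | Sum.inr (i, k) =>
      if isRed r n i k then Finset.Icc (vpos r n i) (vpos r n k)
      else Finset.Icc (vpos r n i + 1) (vpos r n k)

/-- Validity of an element of `P(D_n)`: `1 ≤ j ≤ c_{n-1}` for a single edge,
`0 ≤ i < k ≤ c_{n-2}` for a subpath `α(i,k)`. -/
def validElt (r n : ℕ) : Elt → Prop
  | Sum.inl j => 1 ≤ j ∧ (j : ℤ) ≤ c r (n - 1)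
  | Sum.inr (i, k) => i < k ∧ (k : ℤ) ≤ c r (n - 2)

/-- The common conditions on a collection `β = {β_1,…,β_t}` of elements of `P(D_n)`:
all elements are valid, distinct elements share no edge, and for any two subpaths
`α(i,k)`, `α(i',k')` one has `i ≠ k'` and `i' ≠ k`. -/
def validColl (r n : ℕ) (β : Finset Elt) : Prop :=
  (∀ p ∈ β, validElt r n p) ∧
  (∀ p ∈ β, ∀ q ∈ β, p ≠ q → Disjoint (edges r n p) (edges r n q)) ∧
  (∀ i k i' k' : ℕ, Sum.inr (i, k) ∈ β → Sum.inr (i', k') ∈ β → i ≠ k' ∧ i' ≠ k)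

/-- The `c_{m-1} - w·c_{m-2}` edges of `D_n` immediately preceding the vertex `v_i`. -/
def precEdges (r n i m w : ℕ) : Finset ℕ :=
  Finset.Icc (vpos r n i + 1 - (c r (m - 1) - (w : ℤ) * c r (m - 2)).toNat) (vpos r n i)

/-- The set `F(D_n)`. -/
def FD (r n : ℕ) : Set (Finset Elt) :=
  {β | validColl r n β ∧
    ∀ i k m w : ℕ, Sum.inr (i, k) ∈ β → isGreenMW r n i k m w →
      ∃ e ∈ precEdges r n i m w, ∃ p ∈ β, e ∈ edges r n p}

/-- The set `F̃(D_n)`. -/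
def Ftilde (r n : ℕ) : Set (Finset Elt) := {β | validColl r n β}

/-- The set `T^{≥u}(D_n)`. -/
def Tge (r n u : ℕ) : Set (Finset Elt) :=
  {β | validColl r n β ∧ β.Nonempty ∧
    ∃ i k m w : ℕ, u ≤ m ∧ Sum.inr (i, k) ∈ β ∧ isGreenMW r n i k m w ∧
      ∀ e ∈ precEdges r n i m w, ∀ p ∈ β, e ∉ edges r n p}

/-- `|β_j|_1` for a single element. -/
def wt1 : Elt → ℕ
  | Sum.inl _ => 0
  | Sum.inr (i, k) => k - i

/-- `|β|_1`. -/
def B1 (β : Finset Elt) : ℕ := ∑ p ∈ β, wt1 p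

/-- `|β|_2`: the total number of edges in the collection `β`. -/
def B2 (r n : ℕ) (β : Finset Elt) : ℕ := (β.biUnion (edges r n)).card

/-- The field `ℚ(x₁,x₂)`. -/
abbrev K := FractionRing (MvPolynomial (Fin 2) ℚ)

/-- The indeterminate `x₁`. -/
def x₁ : K := algebraMap (MvPolynomial (Fin 2) ℚ) K (MvPolynomial.X 0)

/-- The indeterminate `x₂`. -/
def x₂ : K := algebraMap (MvPolynomial (Fin 2) ℚ) K (MvPolynomial.X 1)

/-- `b_{n-1,k}`: `r` if the edge `α_k` of `D_n` is horizontal, `r-1` if vertical. -/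
def bseq (r n k : ℕ) : ℕ := if isVert r n k then r - 1 else r

/-- Prefix sums `S e = Σ_{k=1}^{e} b_{n-1,k}`. -/
def S (r n e : ℕ) : ℕ := ∑ k ∈ Finset.Icc 1 e, bseq r n k

/-- The interval `[a,b] ⊆ [1,c_n]` is (the edge set of) a blue or green subpath of `D_{n+1}`. -/
def isBGinterval (r n a b : ℕ) : Prop :=
  ∃ i k : ℕ, i < k ∧ (k : ℤ) ≤ c r (n - 1) ∧ ¬ isRed r (n + 1) i k ∧
    Finset.Icc a b = Finset.Icc (vpos r (n + 1) i + 1) (vpos r (n + 1) k)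

/-- Left endpoints of the maximal interval components of `V`. -/
def starts (V : Finset ℕ) : Finset ℕ := V.filter fun e => e - 1 ∉ V

/-- Right endpoint of the maximal interval component of `V` starting at `e`. -/
def compEnd (V : Finset ℕ) (e : ℕ) : ℕ := sSup {g : ℕ | Finset.Icc e g ⊆ V}

/-- `f_i(V)`: the image of the maximal interval component of `V` starting at `e`. -/
def fcomp (r n : ℕ) (V : Finset ℕ) (e : ℕ) : Finset ℕ :=
  if isBGinterval r n (S r n (e - 1) + 1) (S r n (compEnd V e)) then
    Finset.Icc (S r n (e - 1) + 1) (S r n (compEnd V e))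
  else
    insert (S r n (e - 1)) (Finset.Icc (S r n (e - 1) + 1) (S r n (compEnd V e)))

/-- The map `f` from subsets of `[1,c_{n-1}]` to subsets of `[1,c_n]`. -/
def fmap (r n : ℕ) (V : Finset ℕ) : Finset ℕ := (starts V).biUnion (fcomp r n V)

/-- The pull-back `f*` (of the map `f` one level down, from subsets of `[1,c_{n-2}]`
to subsets of `[1,c_{n-1}]`). -/
def fstar (r n : ℕ) (W : Finset ℕ) : Finset ℕ :=
  ((Finset.Icc 1 (cN r (n - 2))).powerset.filter fun U => fmap r (n - 1) U ⊆ W).biUnion id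

/-- `δ` of a maximal interval component `[e,g]`: `1` if the `w`-th edge of the corresponding
subpath of `D_n` is vertical for some `2 ≤ w ≤ r-1`, and `0` otherwise. -/
def deltaComp (r n e g : ℕ) : ℕ :=
  if ∃ w : ℕ, 2 ≤ w ∧ w ≤ r - 1 ∧ e + w - 1 ≤ g ∧ isVert r n (e + w - 1) then 1 else 0

/-- `δ_V`. -/
def deltaV (r n : ℕ) (V : Finset ℕ) : ℕ :=
  ∑ e ∈ starts V, deltaComp r n e (compEnd V e)

/-- Generalized binomial coefficient for integers `A`, `B`. -/
def gbinom (A B : ℤ) : ℚ :=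
  if B < 0 then 0
  else (∏ i ∈ Finset.range B.toNat, ((A : ℚ) - (i : ℚ))) / (B.toNat.factorial : ℚ)

/-- `z_n` for `n ≥ 4`, given by the sum over `F̃(D_n)`. -/
def zF (r n : ℕ) : K :=
  x₁ ^ (-(c r (n - 1))) * x₂ ^ (-(c r (n - 2))) *
    ∑ᶠ β ∈ Ftilde r n,
      x₁ ^ ((r : ℤ) * (B1 β : ℤ)) * x₂ ^ ((r : ℤ) * (c r (n - 1) - (B2 r n β : ℤ)))

/-- `z_n`, with `z_3 = x_3` (the value `x3` is the cluster variable `x_3`). -/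
def z (r : ℕ) (x3 : K) (n : ℕ) : K := if n = 3 then x3 else zF r n

end

/-!
Each edge `α_k` of `D_n` contributes `r` or `r - 1` to `S e = Σ_{k ≤ e} b_{n-1,k}` according as
the height of the path stays or goes up, so `S e = r e - ⌊e c_{n-2} / c_{n-1}⌋`. By the
recurrence `c_n = r c_{n-1} - c_{n-2}` this is `⌈e c_n / c_{n-1}⌉`, the position of the vertex
`v_e` on `D_{n+1}`. Hence `W_i` is exactly the edge set from `v_{e-1}` to `v_g` for the component
`[e, g]`, and since `S` is strictly increasing the blue-or-green test in `f_i` is the one for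
`α(e-1, g)`. Conversely `α(i, k)` is the image of the interval `[i+1, k]`.
-/

section

variable {r : ℕ}

theorem c_strictMono (hr : 2 ≤ r) : StrictMono (c r) := by
  -- For `c (m+1) ≥ 0` the recurrence gives `c (m+2) - c (m+1) ≥ c (m+1) - c m`.
  have step : ∀ m, 0 ≤ c r (m + 1) ∧ c r (m + 1) < c r (m + 2) := by
    intro m
    induction m with
    | zero => norm_num [c]
    | succ k ih =>
      have hr' : (2 : ℤ) ≤ r := by exact_mod_cast hr
      refine ⟨by linarith [ih.1, ih.2], ?_⟩
      show c r (k + 2) < (r : ℤ) * c r (k + 2) - c r (k + 1)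
      nlinarith [ih.1, ih.2]
  refine strictMono_nat_of_lt_succ fun m => ?_
  cases m with
  | zero => norm_num [c]
  | succ m => exact (step m).2

theorem cN_cast (hr : 2 ≤ r) {m : ℕ} (hm : 1 ≤ m) : (cN r m : ℤ) = c r m :=
  Int.toNat_of_nonneg ((c_strictMono hr).monotone hm)

theorem cN_pos (hr : 2 ≤ r) {m : ℕ} (hm : 2 ≤ m) : 0 < cN r m :=
  Int.lt_toNat.mpr ((c_strictMono hr) (show 1 < m by omega))

theorem cN_mono (hr : 2 ≤ r) : Monotone (cN r) :=
  fun _ _ h => Int.toNat_le_toNat ((c_strictMono hr).monotone h)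

theorem cN_add_cN (hr : 2 ≤ r) {m : ℕ} (hm : 1 ≤ m) :
    cN r (m + 2) + cN r m = r * cN r (m + 1) := by
  have h : c r (m + 2) + c r m = r * c r (m + 1) := by rw [c]; ring
  rw [← cN_cast hr hm, ← cN_cast hr (by omega), ← cN_cast hr (by omega)] at h
  exact_mod_cast h

theorem succ_mul_div_le_mul_div_add_one {a B : ℕ} (h : a ≤ B) (k : ℕ) :
    (k + 1) * a / B ≤ k * a / B + 1 := by
  rcases B.eq_zero_or_pos with rfl | hB
  · simp
  calc (k + 1) * a / B ≤ (k * a + B) / B := Nat.div_le_div_right (by rw [add_mul]; omega)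
    _ = k * a / B + 1 := Nat.add_div_right _ hB

/-- Ceiling division `⌈(q B - x) / B⌉ = q - ⌊x / B⌋`. -/
theorem sub_add_pred_div {B q x : ℕ} (hB : 0 < B) (hx : x ≤ q * B) :
    (q * B - x + B - 1) / B = q - x / B := by
  have hdiv := Nat.div_add_mod x B
  have hmod := Nat.mod_lt x hB
  have hsub : (q - x / B) * B = q * B - x / B * B := Nat.sub_mul _ _ _
  have hcomm : B * (x / B) = x / B * B := mul_comm _ _
  apply Nat.div_eq_of_lt_le
  · rw [hsub]; omega
  · rw [add_mul, hsub]; omega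

theorem hgt_le_hgt_succ (hr : 2 ≤ r) (n k : ℕ) :
    hgt r n k ≤ hgt r n (k + 1) ∧ hgt r n (k + 1) ≤ hgt r n k + 1 :=
  ⟨Nat.div_le_div_right (Nat.mul_le_mul_right _ k.le_succ),
    succ_mul_div_le_mul_div_add_one (cN_mono hr (by omega)) k⟩

theorem S_succ (r n e : ℕ) : S r n (e + 1) = S r n e + bseq r n (e + 1) :=
  Finset.sum_Icc_succ_top (by omega) _

theorem S_strictMono (hr : 2 ≤ r) (n : ℕ) : StrictMono (S r n) :=
  strictMono_nat_of_lt_succ fun e => by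
    rw [S_succ]
    unfold bseq
    split_ifs <;> omega

theorem S_add_hgt (hr : 2 ≤ r) (n e : ℕ) : S r n e + hgt r n e = r * e := by
  induction e with
  | zero => simp [S, hgt]
  | succ e ih =>
    have hstep := hgt_le_hgt_succ hr n e
    rw [S_succ, mul_add_one]
    unfold bseq isVert
    rw [Nat.add_sub_cancel]
    split_ifs <;> omega

theorem vpos_succ_eq_S (hr : 2 ≤ r) {n : ℕ} (hn : 3 ≤ n) (e : ℕ) :
    vpos r (n + 1) e = S r n e := by
  obtain ⟨m, rfl⟩ : ∃ m, n = m + 2 := ⟨n - 2, by omega⟩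
  have hrec := cN_add_cN hr (show 1 ≤ m by omega)
  have hB := cN_pos hr (show 2 ≤ m + 1 by omega)
  have hqB : r * e * cN r (m + 1) = e * cN r (m + 2) + e * cN r m := by
    rw [← mul_add, hrec]; ring
  have hx : e * cN r m ≤ r * e * cN r (m + 1) := by omega
  have hq : r * e * cN r (m + 1) - e * cN r m = e * cN r (m + 2) := by omega
  have hS : S r (m + 2) e + e * cN r m / cN r (m + 1) = r * e := S_add_hgt hr (m + 2) e
  unfold vpos
  simp only [show m + 2 + 1 - 1 = m + 2 by omega, show m + 2 + 1 - 2 = m + 1 by omega]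
  rw [← hq, sub_add_pred_div hB hx]
  omega

theorem isBGinterval_S_iff (hr : 2 ≤ r) {n : ℕ} (hn : 3 ≤ n) {i k : ℕ} (hik : i < k)
    (hk : (k : ℤ) ≤ c r (n - 1)) :
    isBGinterval r n (S r n i + 1) (S r n k) ↔ ¬ isRed r (n + 1) i k := by
  have hS := S_strictMono hr n
  simp only [isBGinterval, vpos_succ_eq_S hr hn]
  refine ⟨fun ⟨i₀, k₀, _, _, hred, heq⟩ => ?_, fun hred => ⟨i, k, hik, hk, hred, rfl⟩⟩
  rw [← Finset.coe_inj, Finset.coe_Icc, Finset.coe_Icc,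
    Set.Icc_eq_Icc_iff (by have := hS hik; omega)] at heq
  rwa [hS.injective (Nat.succ_injective heq.1), hS.injective heq.2]

theorem fcomp_eq_edges (hr : 2 ≤ r) {n : ℕ} (hn : 3 ≤ n) {V : Finset ℕ} {e : ℕ}
    (he : e - 1 < compEnd V e) (hk : (compEnd V e : ℤ) ≤ c r (n - 1)) :
    fcomp r n V e = edges r (n + 1) (Sum.inr (e - 1, compEnd V e)) := by
  have hSlt := S_strictMono hr n he
  have hiff := isBGinterval_S_iff hr hn he hk
  simp only [fcomp, edges, vpos_succ_eq_S hr hn]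
  by_cases hred : isRed r (n + 1) (e - 1) (compEnd V e)
  · rw [if_neg (mt hiff.mp (not_not.mpr hred)), if_pos hred,
      Finset.insert_Icc_add_one_left_eq_Icc hSlt.le]
  · rw [if_pos (hiff.mpr hred), if_neg hred]

end

theorem bddAbove_compEnd_set (V : Finset ℕ) (e : ℕ) : BddAbove {g : ℕ | Finset.Icc e g ⊆ V} := by
  refine ⟨max e (V.sup id), fun g hg => ?_⟩
  by_cases hge : e ≤ g
  · exact le_max_of_le_right (Finset.le_sup (f := id) (hg (Finset.mem_Icc.mpr ⟨hge, le_rfl⟩)))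
  · exact le_max_of_le_left (by omega)

theorem le_compEnd {V : Finset ℕ} {e : ℕ} (he : e ∈ V) : e ≤ compEnd V e :=
  le_csSup (bddAbove_compEnd_set V e) (by simpa using he)

theorem compEnd_mem {V : Finset ℕ} {e : ℕ} (he : e ∈ V) : compEnd V e ∈ V :=
  Nat.sSup_mem ⟨e, by simpa using he⟩ (bddAbove_compEnd_set V e)
    (Finset.mem_Icc.mpr ⟨le_compEnd he, le_rfl⟩)

theorem compEnd_Icc {a b : ℕ} (hab : a ≤ b) : compEnd (Finset.Icc a b) a = b := by
  have hset : {g : ℕ | Finset.Icc a g ⊆ Finset.Icc a b} = Set.Iic b := by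
    ext g
    simp only [Set.mem_ofPred_eq, Set.mem_Iic]
    refine ⟨fun h => ?_, Finset.Icc_subset_Icc_right⟩
    by_contra hgb
    exact hgb (Finset.mem_Icc.mp (h (Finset.mem_Icc.mpr ⟨by omega, le_rfl⟩))).2
  rw [compEnd, hset, csSup_Iic]

theorem starts_Icc {a b : ℕ} (ha : 1 ≤ a) (hab : a ≤ b) : starts (Finset.Icc a b) = {a} := by
  ext x
  simp only [starts, Finset.mem_filter, Finset.mem_Icc, Finset.mem_singleton]
  omega

theorem fmap_Icc {r n a b : ℕ} (ha : 1 ≤ a) (hab : a ≤ b) :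
    fmap r n (Finset.Icc a b) = fcomp r n (Finset.Icc a b) a := by
  rw [fmap, starts_Icc ha hab, Finset.singleton_biUnion]

theorem fmap_components_are_subpaths (r : ℕ) (hr : 2 ≤ r) (n : ℕ) (hn : 4 ≤ n) :
    (∀ V : Finset ℕ, V ⊆ Finset.Icc 1 (cN r (n - 1)) → V.Nonempty →
      ∀ e ∈ starts V, ∃ i' k' : ℕ, i' < k' ∧ (k' : ℤ) ≤ c r (n - 1) ∧
        fcomp r n V e = edges r (n + 1) (Sum.inr (i', k'))) ∧
    (∀ i' k' : ℕ, i' < k' → (k' : ℤ) ≤ c r (n - 1) →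
      ∃ a b : ℕ, 1 ≤ a ∧ a ≤ b ∧ (b : ℤ) ≤ c r (n - 1) ∧
        fmap r n (Finset.Icc a b) = edges r (n + 1) (Sum.inr (i', k'))) := by
  refine ⟨fun V hV _ e he => ?_, fun i k hik hk => ?_⟩
  · have heV := (Finset.mem_filter.mp he).1
    have he1 := (Finset.mem_Icc.mp (hV heV)).1
    have hle := le_compEnd heV
    have hk : (compEnd V e : ℤ) ≤ c r (n - 1) := by
      rw [← cN_cast hr (by omega)]
      exact_mod_cast (Finset.mem_Icc.mp (hV (compEnd_mem heV))).2
    exact ⟨e - 1, compEnd V e, by omega, hk, fcomp_eq_edges hr (by omega) (by omega) hk⟩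
  · refine ⟨i + 1, k, by omega, hik, hk, ?_⟩
    have hend := compEnd_Icc hik
    rw [fmap_Icc (by omega) hik, fcomp_eq_edges hr (by omega) (by omega) (by rwa [hend]), hend,
      Nat.succ_sub_one]

end CF
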